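/- arXiv:2006.12773 — 7 statements merged into one kernel-verified Lean document; each statement's English description precedes it below -/
import Mathlib

section
/- Let V be a finite set, f : 2^V → ℝ a non-negative set function, and for each integer j > 0 let ε_j = max{ f(X∖{v}) − f(X) : X ⊆ V, |X| < j, v ∈ V } (and ε_0 = 0). Then for all sets O, X ⊆ V one has f(O ∪ X) ≥ f(O) − |X ∖ O| · ε_{|O ∪ X| + 1}. -/
open Finset

theorem Finset.sub_card_mul_le_of_erase_sub_le {α : Type*} [DecidableEq α]
    {f : Finset α → ℝ} {e : ℝ} {O D : Finset α} (hOD : Disjoint O D)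
    (h : ∀ Y ⊆ O ∪ D, ∀ a ∈ Y, f (Y.erase a) - f Y ≤ e) :
    f O - #D * e ≤ f (O ∪ D) := by
  induction D using Finset.induction_on with
  | empty => simp
  | @insert a D haD ih =>
    rw [disjoint_insert_right] at hOD
    have hstep : f (O ∪ D) - f (insert a (O ∪ D)) ≤ e := by
      have := h (insert a (O ∪ D)) (union_insert a O D).superset a (mem_insert_self a _)
      rwa [erase_insert (by simp [hOD.1, haD])] at this
    have hprev := ih hOD.2 fun Y hY => h Y (hY.trans (union_subset_union_right (subset_insert a D)))
    rw [union_insert, card_insert_of_notMem haD]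
    push_cast
    linarith

theorem stmt_0_general {α : Type*} [DecidableEq α] (V : Finset α) (f : Finset α → ℝ)
    (ε : ℕ → ℝ)
    (hε : ∀ j : ℕ, 0 < j →
      IsGreatest {r : ℝ | ∃ X ⊆ V, ∃ v ∈ V, X.card < j ∧ r = f (X.erase v) - f X} (ε j)) :
    ∀ O ⊆ V, ∀ X ⊆ V,
      f (O ∪ X) ≥ f O - ((X \ O).card : ℝ) * ε ((O ∪ X).card + 1) := by
  intro O hO X hX
  have hstep : ∀ Y ⊆ O ∪ X \ O, ∀ a ∈ Y, f (Y.erase a) - f Y ≤ ε ((O ∪ X).card + 1) := by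
    intro Y hY a ha
    rw [union_sdiff_self_eq_union] at hY
    have hYV : Y ⊆ V := hY.trans (union_subset hO hX)
    exact (hε _ (Nat.succ_pos _)).2 ⟨Y, hYV, a, hYV ha, Nat.lt_succ_of_le (card_le_card hY), rfl⟩
  have := sub_card_mul_le_of_erase_sub_le disjoint_sdiff hstep
  rwa [union_sdiff_self_eq_union] at this

/-- For a non-negative set function `f` on a finite set `V` with
monotonicity approximation term `ε`, for all `O, X ⊆ V` we have
`f(O ∪ X) ≥ f(O) − |X ∖ O| · ε_{|O ∪ X| + 1}`. -/
theorem stmt_0 {α : Type*} [DecidableEq α] (V : Finset α) (f : Finset α → ℝ)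
    (hf0 : ∀ X ⊆ V, 0 ≤ f X)
    (ε : ℕ → ℝ) (hε0 : ε 0 = 0)
    (hε : ∀ j : ℕ, 0 < j →
      IsGreatest {r : ℝ | ∃ X ⊆ V, ∃ v ∈ V, X.card < j ∧ r = f (X.erase v) - f X} (ε j)) :
    ∀ O ⊆ V, ∀ X ⊆ V,
      f (O ∪ X) ≥ f O - ((X \ O).card : ℝ) * ε ((O ∪ X).card + 1) :=
  stmt_0_general V f ε hε
end

section
/- Let f be a non-negative submodular function on a finite set V with partition matroid constraints given by a partition B_1,…,B_k of V and integer thresholds d_1,…,d_k (1 ≤ d_i ≤ |B_i|), let d = Σ_i d_i, d̄ = min_i d_i, and let OPT be a feasible set maximizing f. Let X ⊆ V be feasible with |X| = j < d̄, and suppose there exists w ∈ V∖X with f(X ∪ {w}) ≥ f(X). Then there exists v ∈ V∖X such that X ∪ {v} is feasible and f(X ∪ {v}) − f(X) ≥ (1/d)·( f(OPT) − f(X) − j · ε_{d+j+1} ), where ε is the monotonicity approximation term of f. -/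
/-!
Let `v` maximize the gain `f (X ∪ {v}) - f X` over `V ∖ X`. Adding the elements of `X ∖ OPT`
to `OPT` one at a time loses at most `ε` per step, so `f (X ∪ OPT) ≥ f OPT - j ε`. Submodularity
bounds `f (X ∪ OPT) - f X` by the sum of the single-element gains of the at most `d` elements of
`OPT ∖ X`, each of which is at most the gain of `v`. Since `|X| < d̄`, adding `v` keeps every
block within its bound.
-/

open Finset

namespace Finset

theorem card_le_sum_of_inter_card_le {α ι : Type*} [DecidableEq α] [Fintype ι]
    {B : ι → Finset α} {c : ι → ℕ} {S : Finset α} (hS : S ⊆ univ.biUnion B)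
    (hc : ∀ i, (S ∩ B i).card ≤ c i) : S.card ≤ ∑ i, c i :=
  calc S.card = (univ.biUnion fun i => S ∩ B i).card := by
        rw [← inter_biUnion, inter_eq_left.mpr hS]
    _ ≤ ∑ i, (S ∩ B i).card := card_biUnion_le
    _ ≤ ∑ i, c i := sum_le_sum fun i _ => hc i

end Finset

section SetFunction

variable {α : Type*} [DecidableEq α] {V : Finset α} {f : Finset α → ℝ}

theorem sub_le_sum_marginal_of_submodular
    (hsub : ∀ X Y : Finset α, X ⊆ Y → Y ⊆ V → ∀ v ∈ V, v ∉ Y →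
      f (insert v X) - f X ≥ f (insert v Y) - f Y)
    {X : Finset α} (hX : X ⊆ V) {O : Finset α} (hO : O ⊆ V \ X) :
    f (X ∪ O) - f X ≤ ∑ o ∈ O, (f (insert o X) - f X) := by
  induction O using Finset.induction_on with
  | empty => simp
  | @insert a O ha ih =>
    obtain ⟨haV, haX⟩ := mem_sdiff.mp (hO (mem_insert_self a O))
    have hO' : O ⊆ V \ X := (subset_insert a O).trans hO
    have hXO : X ∪ O ⊆ V := union_subset hX (hO'.trans sdiff_subset)
    have hgain := hsub X (X ∪ O) subset_union_left hXO a haV (by simp [haX, ha])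
    rw [union_insert, sum_insert ha]
    linarith [ih hO']

theorem sub_card_mul_le_of_erase_sub_le {n : ℕ} {E : ℝ}
    (hE : ∀ S ⊆ V, ∀ a ∈ V, S.card < n → f (S.erase a) - f S ≤ E)
    {A : Finset α} (hA : A ⊆ V) {T : Finset α} (hT : T ⊆ V \ A) (hcard : (A ∪ T).card < n) :
    f A - T.card * E ≤ f (A ∪ T) := by
  induction T using Finset.induction_on with
  | empty => simp
  | @insert a T ha ih =>
    obtain ⟨haV, haA⟩ := mem_sdiff.mp (hT (mem_insert_self a T))
    have hT' : T ⊆ V \ A := (subset_insert a T).trans hT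
    have hAT : A ∪ insert a T ⊆ V := union_subset hA (hT.trans sdiff_subset)
    have hloss := hE _ hAT a haV hcard
    rw [union_insert, erase_insert (by simp [haA, ha])] at hloss
    have ih' := ih hT' ((card_le_card (union_subset_union_right (subset_insert a T))).trans_lt hcard)
    rw [card_insert_of_notMem ha, union_insert]
    push_cast
    linarith

theorem sub_le_sum_marginal_add_card_mul
    (hsub : ∀ X Y : Finset α, X ⊆ Y → Y ⊆ V → ∀ v ∈ V, v ∉ Y →
      f (insert v X) - f X ≥ f (insert v Y) - f Y)
    {n : ℕ} {E : ℝ} (hE : ∀ S ⊆ V, ∀ a ∈ V, S.card < n → f (S.erase a) - f S ≤ E)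
    {X A : Finset α} (hX : X ⊆ V) (hA : A ⊆ V) (hcard : (X ∪ A).card < n) :
    f A - f X ≤ ∑ a ∈ A \ X, (f (insert a X) - f X) + (X \ A).card * E := by
  have hloss := sub_card_mul_le_of_erase_sub_le hE hA (sdiff_subset_sdiff hX le_rfl)
    (by rwa [union_sdiff_self_eq_union, union_comm])
  have hgain := sub_le_sum_marginal_of_submodular hsub hX (sdiff_subset_sdiff hA le_rfl)
  rw [union_sdiff_self_eq_union] at hgain
  rw [union_sdiff_self_eq_union, union_comm] at hloss
  linarith

end SetFunction

theorem stmt_1_general {α : Type*} [DecidableEq α] (V : Finset α) (f : Finset α → ℝ)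
    (hsub : ∀ X Y : Finset α, X ⊆ Y → Y ⊆ V → ∀ v ∈ V, v ∉ Y →
      f (insert v X) - f X ≥ f (insert v Y) - f Y)
    (k : ℕ) (B : Fin k → Finset α)
    (hcover : Finset.univ.biUnion B = V)
    (dPart : Fin k → ℕ)
    (d : ℕ) (hd : d = ∑ i, dPart i)
    (dbar : ℕ) (hdbar : IsLeast (Set.range dPart) dbar)
    (ε : ℕ → ℝ)
    (hε : ∀ j : ℕ, 0 < j →
      IsGreatest {r : ℝ | ∃ X ⊆ V, ∃ v ∈ V, X.card < j ∧ r = f (X.erase v) - f X} (ε j))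
    (OPT : Finset α) (hOPTsub : OPT ⊆ V) (hOPTfeas : ∀ i, (OPT ∩ B i).card ≤ dPart i)
    (X : Finset α) (hX : X ⊆ V)
    (j : ℕ) (hj : X.card = j) (hjlt : j < dbar)
    (hw : ∃ w ∈ V \ X, f (insert w X) ≥ f X) :
    ∃ v ∈ V \ X, (∀ i, ((insert v X) ∩ B i).card ≤ dPart i) ∧
      f (insert v X) - f X ≥ (1 / (d : ℝ)) * (f OPT - f X - (j : ℝ) * ε (d + j + 1)) := by
  obtain ⟨w, hwVX, hwgain⟩ := hw
  obtain ⟨v, hvVX, hvmax⟩ := exists_max_image (V \ X) (fun u => f (insert u X)) ⟨w, hwVX⟩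
  have hvgain : 0 ≤ f (insert v X) - f X := by linarith [hvmax w hwVX]
  have hE : ∀ S ⊆ V, ∀ a ∈ V, S.card < d + j + 1 → f (S.erase a) - f S ≤ ε (d + j + 1) :=
    fun S hS a ha hc => (hε _ (by omega)).2 ⟨S, hS, a, ha, hc, rfl⟩
  have hEnonneg : 0 ≤ ε (d + j + 1) := by
    simpa using hE ∅ (empty_subset V) w (mem_sdiff.mp hwVX).1 (by simp)
  have hOPTcard : OPT.card ≤ d := hd ▸ card_le_sum_of_inter_card_le (hcover ▸ hOPTsub) hOPTfeas
  refine ⟨v, hvVX, fun i => ?_, ?_⟩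
  · calc (insert v X ∩ B i).card ≤ (insert v X).card := card_le_card inter_subset_left
      _ ≤ X.card + 1 := card_insert_le v X
      _ ≤ dPart i := by linarith [hdbar.2 ⟨i, rfl⟩]
  have hgap := sub_le_sum_marginal_add_card_mul hsub hE hX hOPTsub
    (by linarith [card_union_le X OPT])
  have hsum : ∑ a ∈ OPT \ X, (f (insert a X) - f X) ≤ d * (f (insert v X) - f X) :=
    calc _ ≤ (OPT \ X).card • (f (insert v X) - f X) :=
          sum_le_card_nsmul _ _ _ fun a ha =>
            sub_le_sub_right (hvmax a (sdiff_subset_sdiff hOPTsub le_rfl ha)) _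
      _ ≤ d * (f (insert v X) - f X) := by
          rw [nsmul_eq_mul]
          gcongr
          exact_mod_cast (card_le_card sdiff_subset).trans hOPTcard
  have hloss : ((X \ OPT).card : ℝ) * ε (d + j + 1) ≤ j * ε (d + j + 1) := by
    gcongr
    exact_mod_cast hj ▸ card_le_card sdiff_subset
  rw [ge_iff_le, one_div_mul_eq_div]
  exact div_le_of_le_mul₀ d.cast_nonneg hvgain (by linarith)

/-- Greedy improvement lemma for a non-negative submodular function under
partition matroid constraints. If `X` is feasible with `|X| = j < d̄` and some element of
`V ∖ X` has non-negative marginal gain, then some feasible addition `v` satisfies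
`f(X ∪ {v}) − f(X) ≥ (1/d)·(f(OPT) − f(X) − j·ε_{d+j+1})`. -/
theorem stmt_1 {α : Type*} [DecidableEq α] (V : Finset α) (f : Finset α → ℝ)
    (hf0 : ∀ X ⊆ V, 0 ≤ f X)
    (hsub : ∀ X Y : Finset α, X ⊆ Y → Y ⊆ V → ∀ v ∈ V, v ∉ Y →
      f (insert v X) - f X ≥ f (insert v Y) - f Y)
    (k : ℕ) (hk : 0 < k) (B : Fin k → Finset α)
    (hdisj : ∀ i j : Fin k, i ≠ j → Disjoint (B i) (B j))
    (hcover : Finset.univ.biUnion B = V)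
    (dPart : Fin k → ℕ) (hdPart : ∀ i, 1 ≤ dPart i ∧ dPart i ≤ (B i).card)
    (d : ℕ) (hd : d = ∑ i, dPart i)
    (dbar : ℕ) (hdbar : IsLeast (Set.range dPart) dbar)
    (ε : ℕ → ℝ) (hε0 : ε 0 = 0)
    (hε : ∀ j : ℕ, 0 < j →
      IsGreatest {r : ℝ | ∃ X ⊆ V, ∃ v ∈ V, X.card < j ∧ r = f (X.erase v) - f X} (ε j))
    (OPT : Finset α) (hOPTsub : OPT ⊆ V) (hOPTfeas : ∀ i, (OPT ∩ B i).card ≤ dPart i)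
    (hOPTmax : ∀ Y ⊆ V, (∀ i, (Y ∩ B i).card ≤ dPart i) → f Y ≤ f OPT)
    (X : Finset α) (hX : X ⊆ V) (hXfeas : ∀ i, (X ∩ B i).card ≤ dPart i)
    (j : ℕ) (hj : X.card = j) (hjlt : j < dbar)
    (hw : ∃ w ∈ V \ X, f (insert w X) ≥ f X) :
    ∃ v ∈ V \ X, (∀ i, ((insert v X) ∩ B i).card ≤ dPart i) ∧
      f (insert v X) - f X ≥ (1 / (d : ℝ)) * (f OPT - f X - (j : ℝ) * ε (d + j + 1)) :=
  stmt_1_general V f hsub k B hcover dPart d hd dbar hdbar ε hε OPT hOPTsub hOPTfeas X hX j hj hjlt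
    hw
end

section
/- Let f be a non-negative monotone function on a finite set V with partition matroid constraints given by a partition B_1,…,B_k of V and integer thresholds d_1,…,d_k (1 ≤ d_i ≤ |B_i|), let d = Σ_i d_i, d̄ = min_i d_i, and let OPT be a feasible set maximizing f. Let γ ≥ 0 be a real number such that Σ_{v∈L} ( f(X∪{v}) − f(X) ) ≥ γ · ( f(X∪L) − f(X) ) for every X ⊆ V with |X| ≤ d̄ − 1 + 1 (i.e. |X| < d̄ + 1) and every nonempty L ⊆ V∖X with |L| ≤ d. Then for every feasible X ⊆ V with |X| = j < d̄ there exists v ∈ V∖X such that X ∪ {v} is feasible and f(X ∪ {v}) − f(X) ≥ (γ/d) · ( f(OPT) − f(X) ). -/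
/-- Greedy improvement lemma for a non-negative monotone function under
partition matroid constraints, with submodularity-ratio lower bound `γ`. For every
feasible `X` with `|X| = j < d̄` there is a feasible addition `v` with
`f(X ∪ {v}) − f(X) ≥ (γ/d)·(f(OPT) − f(X))`. -/
theorem stmt_2 {α : Type*} [DecidableEq α] (V : Finset α) (f : Finset α → ℝ)
    (hf0 : ∀ X ⊆ V, 0 ≤ f X)
    (hmono : ∀ S T : Finset α, S ⊆ T → T ⊆ V → f S ≤ f T)
    (k : ℕ) (hk : 0 < k) (B : Fin k → Finset α)
    (hdisj : ∀ i j : Fin k, i ≠ j → Disjoint (B i) (B j))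
    (hcover : Finset.univ.biUnion B = V)
    (dPart : Fin k → ℕ) (hdPart : ∀ i, 1 ≤ dPart i ∧ dPart i ≤ (B i).card)
    (d : ℕ) (hd : d = ∑ i, dPart i)
    (dbar : ℕ) (hdbar : IsLeast (Set.range dPart) dbar)
    (γ : ℝ) (hγ0 : 0 ≤ γ)
    (hγ : ∀ X ⊆ V, X.card < dbar + 1 → ∀ L ⊆ V \ X, L.Nonempty → L.card ≤ d →
      ∑ v ∈ L, (f (insert v X) - f X) ≥ γ * (f (X ∪ L) - f X))
    (OPT : Finset α) (hOPTsub : OPT ⊆ V) (hOPTfeas : ∀ i, (OPT ∩ B i).card ≤ dPart i)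
    (hOPTmax : ∀ Y ⊆ V, (∀ i, (Y ∩ B i).card ≤ dPart i) → f Y ≤ f OPT)
    (X : Finset α) (hX : X ⊆ V) (hXfeas : ∀ i, (X ∩ B i).card ≤ dPart i)
    (j : ℕ) (hj : X.card = j) (hjlt : j < dbar) :
    ∃ v ∈ V \ X, (∀ i, ((insert v X) ∩ B i).card ≤ dPart i) ∧
      f (insert v X) - f X ≥ (γ / (d : ℝ)) * (f OPT - f X) := by
  obtain ⟨i0, hi0⟩ := hdbar.1
  have hdbar_le : ∀ i, dbar ≤ dPart i := fun i => hdbar.2 ⟨i, rfl⟩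
  have hBsubV : ∀ i, B i ⊆ V := by
    intro i x hx
    rw [← hcover]; exact Finset.mem_biUnion.2 ⟨i, Finset.mem_univ i, hx⟩
  have hdpos : 1 ≤ d := by
    have h1 := (hdPart i0).1
    have h2 : dPart i0 ≤ ∑ i, dPart i :=
      Finset.single_le_sum (fun i _ => Nat.zero_le _) (Finset.mem_univ i0)
    omega
  have hfeas : ∀ v ∈ V \ X, ∀ i, ((insert v X) ∩ B i).card ≤ dPart i := by
    intro v hv i
    have h1 : ((insert v X) ∩ B i).card ≤ (insert v (X ∩ B i)).card := by
      apply Finset.card_le_card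
      intro x hx
      simp only [Finset.mem_inter, Finset.mem_insert] at hx ⊢
      tauto
    have h2 := Finset.card_insert_le v (X ∩ B i)
    have h3 : (X ∩ B i).card ≤ X.card := Finset.card_le_card Finset.inter_subset_left
    have h4 := hdbar_le i
    omega
  have hginc : ∀ v ∈ V \ X, f X ≤ f (insert v X) := by
    intro v hv
    exact hmono _ _ (Finset.subset_insert _ _)
      (Finset.insert_subset (Finset.mem_sdiff.1 hv).1 hX)
  have hVXne : (V \ X).Nonempty := by
    have h1 : X.card < V.card := by
      have h2 := Finset.card_le_card (hBsubV i0)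
      have h3 := (hdPart i0).2
      omega
    refine Finset.sdiff_nonempty.2 (fun h => ?_)
    exact absurd (Finset.card_le_card h) (by omega)
  by_cases hcase : f OPT ≤ f X
  · obtain ⟨v, hv⟩ := hVXne
    refine ⟨v, hv, hfeas v hv, ?_⟩
    have h1 := hginc v hv
    have h2 : γ / d * (f OPT - f X) ≤ 0 :=
      mul_nonpos_of_nonneg_of_nonpos (div_nonneg hγ0 (Nat.cast_nonneg d)) (by linarith)
    linarith
  · push_neg at hcase
    set L := OPT \ X with hL
    have hLne : L.Nonempty := by
      refine Finset.sdiff_nonempty.2 (fun h => ?_)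
      exact absurd (hmono _ _ h hX) (by linarith)
    have hLsub : L ⊆ V \ X := Finset.sdiff_subset_sdiff hOPTsub (le_refl X)
    have hOPTcard : OPT.card ≤ d := by
      have hsub : OPT ⊆ Finset.univ.biUnion (fun i => OPT ∩ B i) := by
        intro v hv
        have hvV : v ∈ V := hOPTsub hv
        rw [← hcover] at hvV
        obtain ⟨i, _, hvB⟩ := Finset.mem_biUnion.1 hvV
        exact Finset.mem_biUnion.2 ⟨i, Finset.mem_univ i, Finset.mem_inter.2 ⟨hv, hvB⟩⟩
      calc OPT.card ≤ _ := Finset.card_le_card hsub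
        _ ≤ ∑ i, (OPT ∩ B i).card := Finset.card_biUnion_le
        _ ≤ ∑ i, dPart i := Finset.sum_le_sum (fun i _ => hOPTfeas i)
        _ = d := hd.symm
    have hLcard : L.card ≤ d := le_trans (Finset.card_le_card Finset.sdiff_subset) hOPTcard
    have hsum := hγ X hX (by omega) L hLsub hLne hLcard
    have hXL : f OPT ≤ f (X ∪ L) := by
      apply hmono
      · intro x hx
        by_cases hxX : x ∈ X
        · exact Finset.mem_union_left _ hxX
        · exact Finset.mem_union_right _ (Finset.mem_sdiff.2 ⟨hx, hxX⟩)
      · exact Finset.union_subset hX (fun x hx => hOPTsub (Finset.mem_sdiff.1 hx).1)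
    have hsum2 : ∑ v ∈ L, (f (insert v X) - f X) ≥ γ * (f OPT - f X) := by
      have := mul_le_mul_of_nonneg_left (by linarith : f OPT - f X ≤ f (X ∪ L) - f X) hγ0
      linarith
    obtain ⟨v, hvL, hmax⟩ := Finset.exists_max_image L (fun v => f (insert v X) - f X) hLne
    have hvVX : v ∈ V \ X := hLsub hvL
    refine ⟨v, hvVX, hfeas v hvVX, ?_⟩
    have hbound : ∑ w ∈ L, (f (insert w X) - f X) ≤ L.card * (f (insert v X) - f X) := by
      calc ∑ w ∈ L, (f (insert w X) - f X)
          ≤ ∑ w ∈ L, (f (insert v X) - f X) := Finset.sum_le_sum (fun w hw => hmax w hw)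
        _ = L.card * (f (insert v X) - f X) := by
            rw [Finset.sum_const, nsmul_eq_mul]
    have hg0 : 0 ≤ f (insert v X) - f X := by have := hginc v hvVX; linarith
    have hLd : (L.card : ℝ) ≤ (d : ℝ) := Nat.cast_le.2 hLcard
    have hdpos' : (0:ℝ) < d := by exact_mod_cast hdpos
    rw [ge_iff_le, div_mul_eq_mul_div, div_le_iff₀ hdpos']
    nlinarith [mul_le_mul_of_nonneg_right hLd hg0]
end

section
/- Let d ≥ 1 and i ≥ 0 be integers and let a, x, y, e1, e2 be real numbers with 0 ≤ e1 ≤ e2. If x ≥ (1 − (1 − 1/d)^i) · ( a − (i − 1)·e1 ) and y ≥ x + (1/d)·( a − x − i·e2 ), then y ≥ (1 − (1 − 1/d)^{i+1}) · ( a − i·e2 ). -/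
/-- Inductive step inequality for the submodular case. -/
theorem stmt_3 (d i : ℕ) (hd : 1 ≤ d) (a x y e1 e2 : ℝ)
    (he1 : 0 ≤ e1) (he12 : e1 ≤ e2)
    (hx : x ≥ (1 - (1 - 1 / (d : ℝ)) ^ i) * (a - ((i : ℝ) - 1) * e1))
    (hy : y ≥ x + (1 / (d : ℝ)) * (a - x - (i : ℝ) * e2)) :
    y ≥ (1 - (1 - 1 / (d : ℝ)) ^ (i + 1)) * (a - (i : ℝ) * e2) := by
  have hd0 : (1 : ℝ) ≤ (d : ℝ) := by exact_mod_cast hd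
  have hdpos : (0 : ℝ) < d := by linarith
  have hinv : 1 / (d : ℝ) ≤ 1 := by
    rw [div_le_one hdpos]; exact hd0
  have hinv0 : 0 < 1 / (d : ℝ) := by positivity
  set t : ℝ := 1 - 1 / (d : ℝ) with ht
  clear_value t
  have ht0 : 0 ≤ t := by rw [ht]; linarith
  have ht1 : t ≤ 1 := by rw [ht]; linarith
  have htp0 : 0 ≤ t ^ i := pow_nonneg ht0 i
  have htp1 : t ^ i ≤ 1 := pow_le_one₀ ht0 ht1
  have hicast : (0 : ℝ) ≤ (i : ℝ) := Nat.cast_nonneg i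
  have h1 : ((i : ℝ) - 1) * e1 ≤ (i : ℝ) * e2 := by nlinarith
  have h2 : (1 - t ^ i) * (a - (i : ℝ) * e2) ≤ (1 - t ^ i) * (a - ((i : ℝ) - 1) * e1) :=
    mul_le_mul_of_nonneg_left (by linarith) (by linarith)
  have h3 : (1 - t ^ i) * (a - (i : ℝ) * e2) ≤ x := le_trans h2 hx
  have h4 := mul_le_mul_of_nonneg_left h3 ht0
  have hpow : t ^ (i + 1) = t * t ^ i := by ring
  have h5 : x + 1 / (d : ℝ) * (a - x - (i : ℝ) * e2)
      = t * x + (1 - t) * (a - (i : ℝ) * e2) := by rw [ht]; ring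
  have h7 : (1 - t ^ (i + 1)) * (a - (i : ℝ) * e2)
      = (1 - t) * (a - (i : ℝ) * e2) + t * ((1 - t ^ i) * (a - (i : ℝ) * e2)) := by
    rw [hpow]; ring
  nlinarith [h4, h5, h7, hy]
end

section
/- Let d ≥ 1 and i ≥ 0 be integers and let a, x, y, γ, γ' be real numbers with a ≥ 0 and 0 ≤ γ' ≤ γ ≤ d. If x ≥ (1 − (1 − γ/d)^i) · a and y ≥ x + (γ'/d)·( a − x ), then y ≥ (1 − (1 − γ'/d)^{i+1}) · a. -/
/-- Inductive step inequality for the monotone case. -/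
theorem stmt_4 (d i : ℕ) (hd : 1 ≤ d) (a x y γ γ' : ℝ)
    (ha : 0 ≤ a) (hγ'0 : 0 ≤ γ') (hγ'γ : γ' ≤ γ) (hγd : γ ≤ (d : ℝ))
    (hx : x ≥ (1 - (1 - γ / (d : ℝ)) ^ i) * a)
    (hy : y ≥ x + (γ' / (d : ℝ)) * (a - x)) :
    y ≥ (1 - (1 - γ' / (d : ℝ)) ^ (i + 1)) * a := by
  have hd0 : (0:ℝ) < d := by exact_mod_cast hd
  have hc0 : 0 ≤ γ' / d := div_nonneg hγ'0 hd0.le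
  have hc1 : γ' / d ≤ 1 := by
    rw [div_le_one hd0]; linarith
  have h1 : (0:ℝ) ≤ 1 - γ / d := by
    have : γ / d ≤ 1 := by rw [div_le_one hd0]; linarith
    linarith
  have h2 : 1 - γ / d ≤ 1 - γ' / d := by
    have : γ' / d ≤ γ / d := div_le_div_of_nonneg_right hγ'γ hd0.le
    linarith
  have hpow : (1 - γ / d) ^ i ≤ (1 - γ' / d) ^ i := pow_le_pow_left₀ h1 h2 i
  have hx' : x ≥ (1 - (1 - γ' / d) ^ i) * a := by
    refine le_trans ?_ hx
    have := mul_le_mul_of_nonneg_right (by linarith : 1 - (1 - γ' / d) ^ i ≤ 1 - (1 - γ / d) ^ i) ha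
    linarith
  have key : (1 - γ' / d) * x + (γ' / d) * a ≥
      (1 - γ' / d) * ((1 - (1 - γ' / d) ^ i) * a) + (γ' / d) * a := by
    have := mul_le_mul_of_nonneg_left hx' (by linarith : (0:ℝ) ≤ 1 - γ' / d)
    linarith
  have : y ≥ (1 - γ' / d) * ((1 - (1 - γ' / d) ^ i) * a) + (γ' / d) * a := by
    nlinarith
  calc y ≥ (1 - γ' / d) * ((1 - (1 - γ' / d) ^ i) * a) + (γ' / d) * a := this
    _ = (1 - (1 - γ' / d) ^ (i + 1)) * a := by ring
end

section
/- Let f be a non-negative submodular function on a finite set V with partition matroid constraints given by a partition B_1,…,B_k of V and integer thresholds d_1,…,d_k (1 ≤ d_i ≤ |B_i|), let d = Σ_i d_i, d̄ = min_i d_i, and let OPT be a feasible set maximizing f. Suppose that for every feasible X with |X| < d̄ there exists w ∈ V∖X with f(X ∪ {w}) ≥ f(X). Then there exists a feasible set Z ⊆ V with |Z| ≤ d̄ such that f(Z) ≥ (1 − e^{−d̄/d}) · ( f(OPT) − (d̄ − 1) · ε_{d + d̄} ), where ε is the monotonicity approximation term of f. -/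
/-!
Run the greedy algorithm for `d̄` steps. Adding the at most `d̄ - 1` greedy elements that lie
outside `OPT` to `OPT` costs at most `ε` each, so `f (OPT ∪ Z) ≥ f(OPT) - (d̄ - 1) ε =: O`.
By submodularity, `f (OPT ∪ Z) - f Z` is at most the sum of the `≤ d` marginal gains of the
elements of `OPT`, so the best marginal gain is at least `(O - f Z) / d`. The gap `O - f Z`
therefore shrinks by a factor `1 - 1/d` per step, and `(1 - 1/d)^d̄ ≤ e^{-d̄/d}`. The dummy
elements make the best marginal gain non-negative, which the averaging step needs.
-/

open Finset

section

variable {α : Type*} [DecidableEq α]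

def SubmodularOn (V : Finset α) (f : Finset α → ℝ) : Prop :=
  ∀ X Y : Finset α, X ⊆ Y → Y ⊆ V → ∀ v ∈ V, v ∉ Y →
    f (insert v X) - f X ≥ f (insert v Y) - f Y

namespace SubmodularOn

variable {V : Finset α} {f : Finset α → ℝ}

theorem le_add_sum_marginal (hsub : SubmodularOn V f) {S Z : Finset α} (hS : S ⊆ V)
    (hZ : Z ⊆ V) : f (S ∪ Z) ≤ f Z + ∑ w ∈ S \ Z, (f (insert w Z) - f Z) := by
  induction S using Finset.induction_on with
  | empty => simp
  | insert a S ha ih =>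
    have hSV : S ⊆ V := (subset_insert a S).trans hS
    have haV : a ∈ V := hS (mem_insert_self a S)
    by_cases haZ : a ∈ Z
    · rw [insert_union, insert_eq_of_mem (mem_union_right S haZ),
        insert_sdiff_of_mem S haZ]
      exact ih hSV
    · have haSZ : a ∉ S ∪ Z := by simp [ha, haZ]
      have hgain := hsub Z (S ∪ Z) subset_union_right (union_subset hSV hZ) a haV haSZ
      rw [insert_union, insert_sdiff_of_notMem S haZ,
        sum_insert fun h => ha (mem_sdiff.mp h).1]
      linarith [ih hSV]

theorem le_add_card_mul_of_marginal_le (hsub : SubmodularOn V f) {S Z : Finset α}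
    (hS : S ⊆ V) (hZ : Z ⊆ V) {δ : ℝ} (hδ : 0 ≤ δ)
    (hmarg : ∀ w ∈ V \ Z, f (insert w Z) - f Z ≤ δ) {n : ℕ} (hSn : S.card ≤ n) :
    f (S ∪ Z) ≤ f Z + n * δ := by
  have hsum : ∑ w ∈ S \ Z, (f (insert w Z) - f Z) ≤ (S \ Z).card * δ := by
    simpa using sum_le_card_nsmul (S \ Z) _ δ fun w hw =>
      hmarg w (sdiff_subset_sdiff hS subset_rfl hw)
  have hcard : ((S \ Z).card : ℝ) ≤ n := by exact_mod_cast (card_le_card sdiff_subset).trans hSn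
  linarith [hsub.le_add_sum_marginal hS hZ, mul_le_mul_of_nonneg_right hcard hδ]

theorem exists_sub_le_one_sub_inv_mul (hsub : SubmodularOn V f) {S Z : Finset α}
    (hS : S ⊆ V) (hZ : Z ⊆ V) {n : ℕ} (hn : 0 < n) (hSn : S.card ≤ n) {O : ℝ}
    (hO : O ≤ f (S ∪ Z)) (hnonneg : ∃ w ∈ V \ Z, f Z ≤ f (insert w Z)) :
    ∃ v ∈ V \ Z, O - f (insert v Z) ≤ (1 - 1 / n) * (O - f Z) := by
  obtain ⟨w, hw, hfw⟩ := hnonneg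
  obtain ⟨v, hv, hvmax⟩ := exists_max_image (V \ Z) (fun w => f (insert w Z)) ⟨w, hw⟩
  have hgap := hsub.le_add_card_mul_of_marginal_le hS hZ
    (by linarith [hvmax w hw] : 0 ≤ f (insert v Z) - f Z)
    (fun u hu => by linarith [hvmax u hu]) hSn
  have hn' : (0 : ℝ) < n := by exact_mod_cast hn
  refine ⟨v, hv, ?_⟩
  have hbest : (O - f Z) / n ≤ f (insert v Z) - f Z := by
    rw [div_le_iff₀ hn']
    linarith
  rw [sub_mul, one_mul, one_div_mul_eq_div]
  linarith

end SubmodularOn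

theorem sub_card_mul_le_union {V : Finset α} {f : Finset α → ℝ} {m : ℕ} {E : ℝ}
    (hE : ∀ X ⊆ V, ∀ v ∈ V, X.card < m → f (X.erase v) - f X ≤ E)
    {A S : Finset α} (hA : A ⊆ V) (hS : S ⊆ V) (hAS : Disjoint A S)
    (hcard : A.card + S.card < m) : f A - S.card * E ≤ f (A ∪ S) := by
  induction S using Finset.induction_on with
  | empty => simp
  | insert a S ha ih =>
    have haV : a ∈ V := hS (mem_insert_self a S)
    have haA : a ∉ A := disjoint_right.mp hAS (mem_insert_self a S)
    have haAS : a ∉ A ∪ S := by simp [ha, haA]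
    rw [card_insert_of_notMem ha] at hcard ⊢
    have hloss := hE (insert a (A ∪ S))
      (insert_subset haV (union_subset hA ((subset_insert a S).trans hS))) a haV
      (by rw [card_insert_of_notMem haAS]; linarith [card_union_le A S])
    rw [erase_insert haAS] at hloss
    rw [union_insert]
    push_cast
    linarith [ih ((subset_insert a S).trans hS) (disjoint_insert_right.mp hAS).2 (by omega)]

theorem sub_mul_le_union_of_card_lt {V : Finset α} {f : Finset α → ℝ} {m : ℕ} {E : ℝ}
    (hE : ∀ X ⊆ V, ∀ v ∈ V, X.card < m → f (X.erase v) - f X ≤ E) (hE0 : 0 ≤ E)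
    {S Z : Finset α} (hS : S ⊆ V) (hZ : Z ⊆ V) {r : ℕ} (hZr : Z.card < r)
    (hSr : S.card + r ≤ m) : f S - ((r : ℝ) - 1) * E ≤ f (S ∪ Z) := by
  have hZS : (Z \ S).card + 1 ≤ r := (card_le_card sdiff_subset).trans_lt hZr
  have hZS' : ((Z \ S).card : ℝ) ≤ (r : ℝ) - 1 := by
    linarith [(by exact_mod_cast hZS : ((Z \ S).card : ℝ) + 1 ≤ r)]
  have hloss := sub_card_mul_le_union hE hS (sdiff_subset.trans hZ) disjoint_sdiff
    (by omega)
  rw [union_sdiff_self_eq_union] at hloss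
  linarith [mul_le_mul_of_nonneg_right hZS' hE0]

theorem exists_card_eq_sub_le_pow {V : Finset α} {f : Finset α → ℝ} {c O : ℝ} (hc : 0 ≤ c)
    {T : ℕ} (hstep : ∀ Z ⊆ V, Z.card < T → ∃ v ∈ V \ Z, O - f (insert v Z) ≤ c * (O - f Z))
    {t : ℕ} (ht : t ≤ T) : ∃ Z ⊆ V, Z.card = t ∧ O - f Z ≤ c ^ t * (O - f ∅) := by
  induction t with
  | zero => exact ⟨∅, empty_subset V, rfl, by simp⟩
  | succ t ih =>
    obtain ⟨Z, hZV, rfl, hZ⟩ := ih (by omega)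
    obtain ⟨v, hv, hvZ⟩ := hstep Z hZV (by omega)
    obtain ⟨hvV, hvZ'⟩ := mem_sdiff.mp hv
    refine ⟨insert v Z, insert_subset hvV hZV, card_insert_of_notMem hvZ', ?_⟩
    calc O - f (insert v Z) ≤ c * (O - f Z) := hvZ
      _ ≤ c * (c ^ Z.card * (O - f ∅)) := mul_le_mul_of_nonneg_left hZ hc
      _ = c ^ (Z.card + 1) * (O - f ∅) := by ring

theorem card_le_sum_of_card_inter_le {ι : Type*} [Fintype ι] {B : ι → Finset α}
    {X : Finset α} (hX : X ⊆ univ.biUnion B) {bound : ι → ℕ}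
    (hXB : ∀ i, (X ∩ B i).card ≤ bound i) : X.card ≤ ∑ i, bound i :=
  calc X.card = (univ.biUnion fun i => X ∩ B i).card := by
        rw [← inter_biUnion, inter_eq_left.mpr hX]
    _ ≤ ∑ i, (X ∩ B i).card := card_biUnion_le
    _ ≤ ∑ i, bound i := sum_le_sum fun i _ => hXB i

theorem one_sub_inv_pow_le_exp {n : ℕ} {x : ℝ} (hx : 1 ≤ x) :
    (1 - 1 / x) ^ n ≤ Real.exp (-(n / x)) := by
  have hbase : 0 ≤ 1 - 1 / x := by
    rw [sub_nonneg, div_le_one (by linarith)]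
    exact hx
  calc (1 - 1 / x) ^ n ≤ Real.exp (-(1 / x)) ^ n :=
        pow_le_pow_left₀ hbase (by linarith [Real.add_one_le_exp (-(1 / x))]) n
    _ = Real.exp (-(n / x)) := by rw [← Real.exp_nat_mul]; ring_nf

theorem one_sub_mul_le_of_sub_le_mul_sub {a b O q e : ℝ} (ha : 0 ≤ a) (hb : 0 ≤ b)
    (hq : 0 ≤ q) (hqe : q ≤ e) (he : e ≤ 1) (h : O - a ≤ q * (O - b)) :
    (1 - e) * O ≤ a := by
  rcases le_total O 0 with hO | hO
  · nlinarith
  · nlinarith [mul_le_mul_of_nonneg_right hqe hO]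

end

theorem stmt_5_general {α : Type*} [DecidableEq α] (V : Finset α) (f : Finset α → ℝ)
    (hf0 : ∀ X ⊆ V, 0 ≤ f X)
    (hsub : ∀ X Y : Finset α, X ⊆ Y → Y ⊆ V → ∀ v ∈ V, v ∉ Y →
      f (insert v X) - f X ≥ f (insert v Y) - f Y)
    (k : ℕ) (B : Fin k → Finset α)
    (hcover : Finset.univ.biUnion B = V)
    (dPart : Fin k → ℕ) (hdPart : ∀ i, 1 ≤ dPart i ∧ dPart i ≤ (B i).card)
    (d : ℕ) (hd : d = ∑ i, dPart i)
    (dbar : ℕ) (hdbar : IsLeast (Set.range dPart) dbar)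
    (ε : ℕ → ℝ)
    (hε : ∀ j : ℕ, 0 < j →
      IsGreatest {r : ℝ | ∃ X ⊆ V, ∃ v ∈ V, X.card < j ∧ r = f (X.erase v) - f X} (ε j))
    (OPT : Finset α) (hOPTsub : OPT ⊆ V) (hOPTfeas : ∀ i, (OPT ∩ B i).card ≤ dPart i)
    (hdummy : ∀ X : Finset α, X ⊆ V → (∀ i, (X ∩ B i).card ≤ dPart i) → X.card < dbar →
      ∃ w ∈ V \ X, f (insert w X) ≥ f X) :
    ∃ Z : Finset α, Z ⊆ V ∧ (∀ i, (Z ∩ B i).card ≤ dPart i) ∧ Z.card ≤ dbar ∧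
      f Z ≥ (1 - Real.exp (-((dbar : ℝ) / (d : ℝ)))) *
        (f OPT - ((dbar : ℝ) - 1) * ε (d + dbar)) := by
  obtain ⟨i₀, hi₀⟩ := hdbar.1
  have hdbar_pos : 1 ≤ dbar := hi₀ ▸ (hdPart i₀).1
  have hdbar_le_d : dbar ≤ d := hd ▸ hi₀ ▸ single_le_sum (by simp) (mem_univ i₀)
  have hsmall_feas : ∀ Z : Finset α, Z.card ≤ dbar → ∀ i, (Z ∩ B i).card ≤ dPart i :=
    fun Z hZ i => (card_le_card inter_subset_left).trans (hZ.trans (hdbar.2 ⟨i, rfl⟩))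
  have hEub : ∀ X ⊆ V, ∀ v ∈ V, X.card < d + dbar → f (X.erase v) - f X ≤ ε (d + dbar) :=
    fun X hX v hv hc => (hε _ (by omega)).2 ⟨X, hX, v, hv, hc, rfl⟩
  have hE0 : 0 ≤ ε (d + dbar) := by
    obtain ⟨v, hv, -⟩ := hdummy ∅ (empty_subset V) (hsmall_feas ∅ (by simp)) (by simpa)
    simpa using hEub ∅ (empty_subset V) v (mem_sdiff.mp hv).1 (by simp; omega)
  have hOPTcard : OPT.card ≤ d := hd ▸ card_le_sum_of_card_inter_le (hcover ▸ hOPTsub) hOPTfeas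
  have hd1 : (1 : ℝ) ≤ d := by exact_mod_cast hdbar_pos.trans hdbar_le_d
  have hq : 0 ≤ 1 - 1 / (d : ℝ) := sub_nonneg.mpr (div_le_one_of_le₀ hd1 (by linarith))
  set O := f OPT - ((dbar : ℝ) - 1) * ε (d + dbar)
  have hstep : ∀ Z ⊆ V, Z.card < dbar → ∃ v ∈ V \ Z,
      O - f (insert v Z) ≤ (1 - 1 / (d : ℝ)) * (O - f Z) :=
    fun Z hZ hZcard => SubmodularOn.exists_sub_le_one_sub_inv_mul hsub hOPTsub hZ (by omega)
      hOPTcard (sub_mul_le_union_of_card_lt hEub hE0 hOPTsub hZ hZcard (by omega))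
      (hdummy Z hZ (hsmall_feas Z hZcard.le) hZcard)
  obtain ⟨Z, hZV, hZcard, hZ⟩ := exists_card_eq_sub_le_pow hq hstep le_rfl
  have he1 : Real.exp (-((dbar : ℝ) / (d : ℝ))) ≤ 1 :=
    Real.exp_le_one_iff.mpr (neg_nonpos.mpr (by positivity))
  exact ⟨Z, hZV, hsmall_feas Z hZcard.le, hZcard.le,
    one_sub_mul_le_of_sub_le_mul_sub (hf0 Z hZV) (hf0 ∅ (empty_subset V)) (pow_nonneg hq _)
      (one_sub_inv_pow_le_exp hd1) he1 hZ⟩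

/-- Existence of a feasible set `Z` with `|Z| ≤ d̄` and
`f(Z) ≥ (1 − e^{−d̄/d})·(f(OPT) − (d̄−1)·ε_{d+d̄})` for a non-negative submodular `f`
under partition matroid constraints, assuming dummy elements (non-negative marginal gains
always available below size `d̄`). -/
theorem stmt_5 {α : Type*} [DecidableEq α] (V : Finset α) (f : Finset α → ℝ)
    (hf0 : ∀ X ⊆ V, 0 ≤ f X)
    (hsub : ∀ X Y : Finset α, X ⊆ Y → Y ⊆ V → ∀ v ∈ V, v ∉ Y →
      f (insert v X) - f X ≥ f (insert v Y) - f Y)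
    (k : ℕ) (hk : 0 < k) (B : Fin k → Finset α)
    (hdisj : ∀ i j : Fin k, i ≠ j → Disjoint (B i) (B j))
    (hcover : Finset.univ.biUnion B = V)
    (dPart : Fin k → ℕ) (hdPart : ∀ i, 1 ≤ dPart i ∧ dPart i ≤ (B i).card)
    (d : ℕ) (hd : d = ∑ i, dPart i)
    (dbar : ℕ) (hdbar : IsLeast (Set.range dPart) dbar)
    (ε : ℕ → ℝ) (hε0 : ε 0 = 0)
    (hε : ∀ j : ℕ, 0 < j →
      IsGreatest {r : ℝ | ∃ X ⊆ V, ∃ v ∈ V, X.card < j ∧ r = f (X.erase v) - f X} (ε j))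
    (OPT : Finset α) (hOPTsub : OPT ⊆ V) (hOPTfeas : ∀ i, (OPT ∩ B i).card ≤ dPart i)
    (hOPTmax : ∀ Y ⊆ V, (∀ i, (Y ∩ B i).card ≤ dPart i) → f Y ≤ f OPT)
    (hdummy : ∀ X : Finset α, X ⊆ V → (∀ i, (X ∩ B i).card ≤ dPart i) → X.card < dbar →
      ∃ w ∈ V \ X, f (insert w X) ≥ f X) :
    ∃ Z : Finset α, Z ⊆ V ∧ (∀ i, (Z ∩ B i).card ≤ dPart i) ∧ Z.card ≤ dbar ∧
      f Z ≥ (1 - Real.exp (-((dbar : ℝ) / (d : ℝ)))) *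
        (f OPT - ((dbar : ℝ) - 1) * ε (d + dbar)) :=
  stmt_5_general V f hf0 hsub k B hcover dPart hdPart d hd dbar hdbar ε hε OPT hOPTsub hOPTfeas
    hdummy
end

section
/- Let f be a non-negative monotone function on a finite set V with partition matroid constraints given by a partition B_1,…,B_k of V and integer thresholds d_1,…,d_k (1 ≤ d_i ≤ |B_i|), let d = Σ_i d_i, d̄ = min_i d_i, and let OPT be a feasible set maximizing f. Let γ be a real number with 0 ≤ γ ≤ 1 such that Σ_{v∈L} ( f(X∪{v}) − f(X) ) ≥ γ · ( f(X∪L) − f(X) ) for every X ⊆ V with |X| < d̄ + 1 and every nonempty L ⊆ V∖X with |L| ≤ d. Then there exists a feasible set Z ⊆ V with |Z| ≤ d̄ such that f(Z) ≥ (1 − e^{−γ·d̄/d}) · f(OPT). -/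
/-!
Greedy selection inside `OPT`: a feasible `OPT` has at most `d` elements, so whenever `Z ⊆ OPT`
falls short of `f OPT`, the submodularity ratio applied to `L = OPT \ Z` yields an element
of `L` whose marginal gain is at least `γ / d` times the gap `f OPT - f Z`. Each step thus
shrinks the gap by a factor `1 - γ / d`; after `d̄` steps it is at most
`(1 - γ / d) ^ d̄ * f OPT ≤ exp (-(γ * d̄ / d)) * f OPT`, and every subset of `OPT` is feasible.
-/

open Finset

section

variable {α : Type*}

theorem exists_subset_card_le_and_le_pow_mul {g : Finset α → ℝ} {S : Finset α} {r : ℝ} {n : ℕ}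
    (hr : 0 ≤ r) (hstep : ∀ Z ⊆ S, #Z < n → ∃ Z' ⊆ S, #Z' ≤ #Z + 1 ∧ g Z' ≤ r * g Z) :
    ∃ Z ⊆ S, #Z ≤ n ∧ g Z ≤ r ^ n * g ∅ := by
  suffices ∀ t ≤ n, ∃ Z ⊆ S, #Z ≤ t ∧ g Z ≤ r ^ t * g ∅ from this n le_rfl
  intro t ht
  induction t with
  | zero => exact ⟨∅, empty_subset S, le_rfl, by simp⟩
  | succ t ih =>
    obtain ⟨Z, hZS, hZt, hgZ⟩ := ih (by omega)
    obtain ⟨Z', hZ'S, hZ'Z, hgZ'⟩ := hstep Z hZS (by omega)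
    refine ⟨Z', hZ'S, by omega, ?_⟩
    calc g Z' ≤ r * g Z := hgZ'
      _ ≤ r * (r ^ t * g ∅) := mul_le_mul_of_nonneg_left hgZ hr
      _ = r ^ (t + 1) * g ∅ := by ring

variable [DecidableEq α]

theorem card_le_sum_card_inter_of_subset_biUnion {ι : Type*} {s : Finset ι} {B : ι → Finset α}
    {X : Finset α} (hX : X ⊆ s.biUnion B) : #X ≤ ∑ i ∈ s, #(X ∩ B i) := by
  calc #X = #(X ∩ s.biUnion B) := by rw [inter_eq_left.mpr hX]
    _ = #(s.biUnion fun i => X ∩ B i) := by rw [inter_biUnion]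
    _ ≤ ∑ i ∈ s, #(X ∩ B i) := card_biUnion_le

theorem exists_gap_le_one_sub_div_mul {f : Finset α → ℝ} {Z S : Finset α} {γ : ℝ} {d : ℕ}
    (hZS : Z ⊆ S) (hSd : #S ≤ d) (hγ0 : 0 ≤ γ)
    (hratio : (S \ Z).Nonempty → γ * (f S - f Z) ≤ ∑ v ∈ S \ Z, (f (insert v Z) - f Z)) :
    ∃ Z' ⊆ S, #Z' ≤ #Z + 1 ∧ f S - f Z' ≤ (1 - γ / d) * (f S - f Z) := by
  rcases (S \ Z).eq_empty_or_nonempty with hempty | hne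
  · have hSZ : S = Z := le_antisymm (sdiff_eq_empty_iff_subset.mp hempty) hZS
    exact ⟨Z, hZS, by omega, by simp [hSZ]⟩
  by_cases hgap : f S - f Z ≤ 0
  · have : 0 ≤ γ / d := by positivity
    exact ⟨Z, hZS, by omega, by nlinarith⟩
  replace hgap := not_le.mp hgap
  have hL : (0 : ℝ) < #(S \ Z) := by exact_mod_cast hne.card_pos
  have hLd : (#(S \ Z) : ℝ) ≤ d := by exact_mod_cast (card_le_card sdiff_subset).trans hSd
  -- some element of `S \ Z` has at least the average marginal gain
  obtain ⟨v, hv, hgain⟩ := exists_le_of_sum_le hne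
    (f := fun _ => γ * (f S - f Z) / #(S \ Z)) (g := fun v => f (insert v Z) - f Z) (by
      rw [sum_const, nsmul_eq_mul, mul_div_cancel₀ _ hL.ne']
      exact hratio hne)
  refine ⟨insert v Z, insert_subset (mem_sdiff.mp hv).1 hZS, card_insert_le _ _, ?_⟩
  have : γ / d * (f S - f Z) ≤ γ * (f S - f Z) / #(S \ Z) :=
    calc γ / d * (f S - f Z) ≤ γ / #(S \ Z) * (f S - f Z) := by gcongr
      _ = γ * (f S - f Z) / #(S \ Z) := by ring
  linarith

theorem Real.one_sub_pow_le_exp_neg_mul {x : ℝ} (hx : x ≤ 1) (n : ℕ) :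
    (1 - x) ^ n ≤ Real.exp (-(x * n)) :=
  calc (1 - x) ^ n ≤ Real.exp (-x) ^ n :=
        pow_le_pow_left₀ (sub_nonneg.mpr hx) (Real.one_sub_le_exp_neg x) n
    _ = Real.exp (-(x * n)) := by rw [← Real.exp_nat_mul]; ring_nf

end

theorem stmt_6_general {α : Type*} [DecidableEq α] (V : Finset α) (f : Finset α → ℝ)
    (hf0 : ∀ X ⊆ V, 0 ≤ f X)
    (k : ℕ) (B : Fin k → Finset α)
    (hcover : Finset.univ.biUnion B = V)
    (dPart : Fin k → ℕ)
    (d : ℕ) (hd : d = ∑ i, dPart i)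
    (dbar : ℕ)
    (γ : ℝ) (hγ0 : 0 ≤ γ) (hγ1 : γ ≤ 1)
    (hγ : ∀ X ⊆ V, X.card < dbar + 1 → ∀ L ⊆ V \ X, L.Nonempty → L.card ≤ d →
      ∑ v ∈ L, (f (insert v X) - f X) ≥ γ * (f (X ∪ L) - f X))
    (OPT : Finset α) (hOPTsub : OPT ⊆ V) (hOPTfeas : ∀ i, (OPT ∩ B i).card ≤ dPart i) :
    ∃ Z : Finset α, Z ⊆ V ∧ (∀ i, (Z ∩ B i).card ≤ dPart i) ∧ Z.card ≤ dbar ∧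
      f Z ≥ (1 - Real.exp (-(γ * (dbar : ℝ) / (d : ℝ)))) * f OPT := by
  have hOPTcard : #OPT ≤ d := hd ▸ (card_le_sum_card_inter_of_subset_biUnion
    (hcover ▸ hOPTsub)).trans (sum_le_sum fun i _ => hOPTfeas i)
  have hγd : γ / d ≤ 1 := by
    rcases Nat.eq_zero_or_pos d with hd0 | hd1
    · simp [hd0] -- `γ / 0 = 0`
    · exact div_le_one_of_le₀ (hγ1.trans (by exact_mod_cast hd1)) (Nat.cast_nonneg d)
  obtain ⟨Z, hZ, hZcard, hgap⟩ := exists_subset_card_le_and_le_pow_mul (g := fun Z => f OPT - f Z)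
    (n := dbar) (sub_nonneg.mpr hγd) fun Z hZ hZcard =>
      exists_gap_le_one_sub_div_mul hZ hOPTcard hγ0 fun hne => by
        simpa only [union_sdiff_of_subset hZ, ge_iff_le] using hγ Z (hZ.trans hOPTsub) (by omega) (OPT \ Z)
          (sdiff_subset_sdiff hOPTsub le_rfl) hne ((card_le_card sdiff_subset).trans hOPTcard)
  refine ⟨Z, hZ.trans hOPTsub, fun i => (card_le_card (inter_subset_inter_right hZ)).trans
    (hOPTfeas i), hZcard, ?_⟩
  have hexp : (1 - γ / d) ^ dbar ≤ Real.exp (-(γ * dbar / d)) := by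
    convert Real.one_sub_pow_le_exp_neg_mul hγd dbar using 3; ring
  have hfEmpty := hf0 ∅ (empty_subset V)
  have hfOPT := hf0 OPT hOPTsub
  linarith [mul_le_mul_of_nonneg_right hexp hfOPT,
    mul_nonneg (pow_nonneg (sub_nonneg.mpr hγd) dbar) hfEmpty]

/-- Existence of a feasible set `Z` with `|Z| ≤ d̄` and
`f(Z) ≥ (1 − e^{−γ·d̄/d})·f(OPT)` for a non-negative monotone `f` under partition matroid
constraints, where `γ ∈ [0,1]` lower-bounds the submodularity ratio. -/
theorem stmt_6 {α : Type*} [DecidableEq α] (V : Finset α) (f : Finset α → ℝ)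
    (hf0 : ∀ X ⊆ V, 0 ≤ f X)
    (hmono : ∀ S T : Finset α, S ⊆ T → T ⊆ V → f S ≤ f T)
    (k : ℕ) (hk : 0 < k) (B : Fin k → Finset α)
    (hdisj : ∀ i j : Fin k, i ≠ j → Disjoint (B i) (B j))
    (hcover : Finset.univ.biUnion B = V)
    (dPart : Fin k → ℕ) (hdPart : ∀ i, 1 ≤ dPart i ∧ dPart i ≤ (B i).card)
    (d : ℕ) (hd : d = ∑ i, dPart i)
    (dbar : ℕ) (hdbar : IsLeast (Set.range dPart) dbar)
    (γ : ℝ) (hγ0 : 0 ≤ γ) (hγ1 : γ ≤ 1)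
    (hγ : ∀ X ⊆ V, X.card < dbar + 1 → ∀ L ⊆ V \ X, L.Nonempty → L.card ≤ d →
      ∑ v ∈ L, (f (insert v X) - f X) ≥ γ * (f (X ∪ L) - f X))
    (OPT : Finset α) (hOPTsub : OPT ⊆ V) (hOPTfeas : ∀ i, (OPT ∩ B i).card ≤ dPart i)
    (hOPTmax : ∀ Y ⊆ V, (∀ i, (Y ∩ B i).card ≤ dPart i) → f Y ≤ f OPT) :
    ∃ Z : Finset α, Z ⊆ V ∧ (∀ i, (Z ∩ B i).card ≤ dPart i) ∧ Z.card ≤ dbar ∧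
      f Z ≥ (1 - Real.exp (-(γ * (dbar : ℝ) / (d : ℝ)))) * f OPT :=
  stmt_6_general V f hf0 k B hcover dPart d hd dbar γ hγ0 hγ1 hγ OPT hOPTsub hOPTfeas
end
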